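/- arXiv:2310.01364 — 5 statements merged into one kernel-verified Lean document; each statement's English description precedes it below -/
import Mathlib

section
/- Let f : ℝ^d → ℝ∪{+∞} be lower semicontinuous, quasiconvex, and continuous on the interior of its domain, and assume (H2) holds. Let x ∈ int(dom f) with f(x) > inf f, and let δ > 0 be such that B(x,δ) ⊂ dom f. Then bd([f ≤ f(x)]) ∩ B(x,δ) = [f = f(x)] ∩ B(x,δ), where bd denotes topological boundary. -/
open Filter Set Metric MeasureTheory
open scoped Topology ENNReal NNReal RealInnerProductSpace Pointwise

noncomputable section

abbrev Euc (d : ℕ) := EuclideanSpace ℝ (Fin d)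

/-- The metric slope `|∇f|(x)`, with value `+∞` outside of the domain of `f`. -/
def mslope {d : ℕ} (f : Euc d → EReal) (x : Euc d) : ℝ≥0∞ :=
  if f x = ⊤ then ⊤
  else Filter.limsup (fun y => ENNReal.ofReal ((max (f x - f y) 0).toReal / dist x y)) (𝓝[≠] x)

/-- The limiting slope `|∇f|⁻(x) = liminf_{y→x, f(y)→f(x)} |∇f|(y)`. -/
def limSlope {d : ℕ} (f : Euc d → EReal) (x : Euc d) : ℝ≥0∞ :=
  Filter.liminf (fun y => mslope f y) (𝓝 x ⊓ Filter.comap f (𝓝 (f x)))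

/-- Quasiconvexity for extended-real-valued functions. -/
def QuasiConvexE {d : ℕ} (f : Euc d → EReal) : Prop :=
  ∀ x y : Euc d, ∀ t : ℝ, 0 ≤ t → t ≤ 1 →
    f (t • x + (1 - t) • y) ≤ max (f x) (f y)

/-- Coercivity: every sublevel set below `sup f` is compact. -/
def CoerciveE {d : ℕ} (f : Euc d → EReal) : Prop :=
  ∀ α : ℝ, (α : EReal) < ⨆ x, f x → IsCompact {x : Euc d | f x ≤ (α : EReal)}

/-- Hypothesis (H1). -/
def HypH1 {d : ℕ} (f : Euc d → EReal) : Prop :=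
  CoerciveE f ∧
    ∀ α : ℝ, (⨅ x, f x) < (α : EReal) →
      (interior {x : Euc d | f x ≤ (α : EReal)}).Nonempty

/-- Hypothesis (H2): the slope is bounded away from zero around every non-minimizing
point of the domain. -/
def HypH2 {d : ℕ} (f : Euc d → EReal) : Prop :=
  ∀ x : Euc d, f x ≠ ⊤ → (∃ y, f y < f x) →
    ∃ δ : ℝ, 0 < δ ∧ ∃ ℓ : ℝ≥0∞, 0 < ℓ ∧
      ∀ y ∈ Metric.ball x δ, f y ≠ ⊤ → ℓ < mslope f y

/-- `r`-prox-regularity of a set: points at distance `< r` have a unique nearest point. -/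
def ProxRegularWith {d : ℕ} (r : ℝ) (S : Set (Euc d)) : Prop :=
  ∀ u : Euc d, 0 < Metric.infDist u S → Metric.infDist u S < r →
    ∃! y : Euc d, y ∈ S ∧ dist u y = Metric.infDist u S

/-- Hypothesis (H3). -/
def HypH3 {d : ℕ} (f : Euc d → EReal) : Prop :=
  ∀ α : ℝ, (⨅ x, f x) < (α : EReal) → (α : EReal) < (⨆ x, f x) →
    ∃ η : ℝ, 0 < η ∧ ∃ r : ℝ, 0 < r ∧
      ∀ β : ℝ, |β - α| < η →
        ProxRegularWith r (interior {x : Euc d | f x ≤ (β : EReal)})ᶜ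

/-- Normal cone to a convex set. -/
def normalConeCvx {d : ℕ} (S : Set (Euc d)) (x : Euc d) : Set (Euc d) :=
  {v : Euc d | ∀ y ∈ S, (inner ℝ v (y - x) : ℝ) ≤ 0}

/-- Proximal normal cone to a closed set. -/
def proxNormalCone {d : ℕ} (S : Set (Euc d)) (x : Euc d) : Set (Euc d) :=
  {v : Euc d | ∃ σ : ℝ, 0 < σ ∧ ∀ y ∈ S, (inner ℝ v (y - x) : ℝ) ≤ σ * ‖y - x‖ ^ 2}

open Classical in
/-- The extended-real-valued indicator function of a set. -/
def erealInd {d : ℕ} (C : Set (Euc d)) : Euc d → EReal :=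
  fun x => if x ∈ C then (0 : EReal) else ⊤

/-- The max-convolution `(f ⋄ g)(x) = inf_w max (f (x - w)) (g w)`. -/
def maxConv {d : ℕ} (f g : Euc d → EReal) (x : Euc d) : EReal :=
  ⨅ w : Euc d, max (f (x - w)) (g w)

/-- The regularization `f_ε = f ⋄ I_{ε𝔹}`, i.e. `f_ε x = inf_{w ∈ 𝔹} f (x - ε w)`. -/
def maxConvReg {d : ℕ} (f : Euc d → EReal) (ε : ℝ) (x : Euc d) : EReal :=
  ⨅ w ∈ Metric.closedBall (0 : Euc d) 1, f (x - ε • w)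

/-- The real-valued regularization of a real-valued function. -/
def regR {d : ℕ} (f : Euc d → ℝ) (ε : ℝ) (x : Euc d) : ℝ :=
  sInf ((fun w => f (x - ε • w)) '' Metric.closedBall (0 : Euc d) 1)

/-- `f` admits a steepest descent curve emanating from `x₀`: a 1-Lipschitz curve
`c : [0,T] → ℝ^d` with `c 0 = x₀` such that `(f ∘ c)'(t) = -|∇f|(c t)` for a.e. `t`. -/
def HasSteepestDescentCurveFrom {d : ℕ} (f : Euc d → EReal) (x₀ : Euc d) : Prop :=
  ∃ T : ℝ, 0 < T ∧ ∃ c : ℝ → Euc d,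
    LipschitzOnWith 1 c (Set.Icc 0 T) ∧ c 0 = x₀ ∧
    (∀ t ∈ Set.Icc (0 : ℝ) T, f (c t) ≠ ⊤) ∧
    ∀ᵐ t ∂(volume.restrict (Set.Icc (0 : ℝ) T)),
      mslope f (c t) ≠ ⊤ ∧
      HasDerivAt (fun s => (f (c s)).toReal) (-(mslope f (c t)).toReal) t

/-!
A point `y` of the ball with `f y = f x` lies in the closure of `{f ≤ f x}`; the issue is to see
that it is not interior to it. By (H2) every point of the ball at level `f x` is a limit of points
of the convex set `C = {f < f x}`, so if `y` were interior to `{f ≤ f x}` it would be interior to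
`closure C`. By continuity on the ball `C` has nonempty interior, and for convex sets with nonempty
interior `interior (closure C) = interior C`, whence `f y < f x`. The other inclusion only uses
continuity of `f` at the points of the ball.
-/

theorem QuasiConvexE.convex_lt {d : ℕ} {f : Euc d → EReal} (hf : QuasiConvexE f) (a : EReal) :
    Convex ℝ {y | f y < a} := by
  intro y hy z hz s t hs ht hst
  obtain rfl : t = 1 - s := by linarith
  exact (hf y z s hs (by linarith)).trans_lt (max_lt hy hz)

theorem mem_closure_setOf_lt_of_pos_mslope {d : ℕ} {f : Euc d → EReal} {v : Euc d}
    (hv : f v ≠ ⊤) (hslope : 0 < mslope f v) : v ∈ closure {z | f z < f v} := by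
  by_contra hcl
  have hge : ∀ᶠ z in 𝓝 v, f v ≤ f z := by
    simpa [mem_closure_iff_frequently, not_frequently] using hcl
  refine hslope.ne' (nonpos_iff_eq_zero.mp ?_)
  rw [mslope, if_neg hv]
  refine limsup_le_of_le (by isBoundedDefault) ?_
  filter_upwards [nhdsWithin_le_nhds hge] with z hz
  simp [EReal.sub_nonpos.mpr hz]

theorem HypH2.mem_closure_setOf_lt {d : ℕ} {f : Euc d → EReal} (hf : HypH2 f) {v : Euc d}
    (hv : f v ≠ ⊤) (hmin : ∃ y, f y < f v) : v ∈ closure {z | f z < f v} := by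
  obtain ⟨ε, hε, ℓ, hℓ, hslope⟩ := hf v hv hmin
  exact mem_closure_setOf_lt_of_pos_mslope hv (hℓ.trans (hslope v (mem_ball_self hε) hv))

section Frontier

variable {E β : Type*} [TopologicalSpace E] [LinearOrder β] [TopologicalSpace β]
  [OrderTopology β] {f : E → β} {a : β} {y : E}

theorem eq_of_mem_frontier_setOf_le (hf : ContinuousAt f y)
    (hy : y ∈ frontier {z | f z ≤ a}) : f y = a := by
  have hle : f y ≤ a :=
    ContinuousWithinAt.closure_le hy.1 hf.continuousWithinAt continuousWithinAt_const
      fun _ h => h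
  refine hle.eq_or_lt.resolve_right fun hlt => hy.2 ?_
  exact mem_interior_iff_mem_nhds.mpr
    (mem_of_superset (hf.preimage_mem_nhds (Iio_mem_nhds hlt)) fun _ h => le_of_lt h)

theorem mem_frontier_setOf_le_of_convex [AddCommGroup E] [Module ℝ E] [IsTopologicalAddGroup E]
    [ContinuousSMul ℝ E] {U : Set E} (hU : IsOpen U) (hf : ContinuousOn f U)
    (hconv : Convex ℝ {z | f z < a}) (hlevel : ∀ v ∈ U, f v = a → v ∈ closure {z | f z < a})
    (hyU : y ∈ U) (hya : f y = a) : y ∈ frontier {z | f z ≤ a} := by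
  set C := {z | f z < a}
  refine ⟨subset_closure hya.le, fun hyint => ?_⟩
  have hsub : interior {z | f z ≤ a} ∩ U ⊆ closure C := fun v ⟨hvS, hvU⟩ =>
    (interior_subset hvS : v ∈ {z | f z ≤ a}).lt_or_eq.elim (fun h => subset_closure h)
      (hlevel v hvU)
  have hy : y ∈ interior (closure C) :=
    interior_maximal hsub (isOpen_interior.inter hU) ⟨hyint, hyU⟩
  have hne : (interior C).Nonempty := by
    obtain ⟨z, hzU, hzC⟩ := mem_closure_iff.mp (interior_subset hy) U hU hyU
    exact ⟨z, interior_maximal inter_subset_right (hf.isOpen_inter_preimage hU isOpen_Iio)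
      ⟨hzU, hzC⟩⟩
  rw [hconv.interior_closure_eq_interior_of_nonempty_interior hne] at hy
  exact (interior_subset hy : y ∈ C).ne hya

end Frontier

theorem statement0_general {d : ℕ} (f : Euc d → EReal)
    (hqc : QuasiConvexE f)
    (hcont : ContinuousOn f (interior {x : Euc d | f x ≠ ⊤}))
    (hH2 : HypH2 f)
    (x : Euc d)
    (hxinf : (⨅ y, f y) < f x)
    (δ : ℝ)
    (hball : Metric.ball x δ ⊆ {y : Euc d | f y ≠ ⊤}) :
    frontier {y : Euc d | f y ≤ f x} ∩ Metric.ball x δ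
      = {y : Euc d | f y = f x} ∩ Metric.ball x δ := by
  have hcontB : ContinuousOn f (ball x δ) := hcont.mono (interior_maximal hball isOpen_ball)
  have hlevel : ∀ v ∈ ball x δ, f v = f x → v ∈ closure {z | f z < f x} := by
    intro v hvB hv
    obtain ⟨z, hz⟩ := iInf_lt_iff.mp hxinf
    rw [← hv] at hz ⊢
    exact hH2.mem_closure_setOf_lt (hball hvB) ⟨z, hz⟩
  ext y
  constructor
  · rintro ⟨hy, hyB⟩
    exact ⟨eq_of_mem_frontier_setOf_le (hcontB.continuousAt (isOpen_ball.mem_nhds hyB)) hy, hyB⟩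
  · rintro ⟨hy, hyB⟩
    exact ⟨mem_frontier_setOf_le_of_convex isOpen_ball hcontB (hqc.convex_lt _) hlevel hyB hy, hyB⟩

theorem statement0 {d : ℕ} (f : Euc d → EReal)
    (hne_bot : ∀ x, f x ≠ ⊥)
    (hlsc : LowerSemicontinuous f)
    (hqc : QuasiConvexE f)
    (hcont : ContinuousOn f (interior {x : Euc d | f x ≠ ⊤}))
    (hH2 : HypH2 f)
    (x : Euc d)
    (hx : x ∈ interior {y : Euc d | f y ≠ ⊤})
    (hxinf : (⨅ y, f y) < f x)
    (δ : ℝ) (hδ : 0 < δ)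
    (hball : Metric.ball x δ ⊆ {y : Euc d | f y ≠ ⊤}) :
    frontier {y : Euc d | f y ≤ f x} ∩ Metric.ball x δ
      = {y : Euc d | f y = f x} ∩ Metric.ball x δ :=
  statement0_general f hqc hcont hH2 x hxinf δ hball

end
end

section
/- Let ε > 0, let Γ ⊂ ℝ^d be a Borel set with finite (d−1)-dimensional Hausdorff measure ℋ^{d−1}(Γ) < ∞, and let u : [0,ε] × Γ → ℝ^d be a bi-Lipschitz map, i.e. there exist constants 0 < c ≤ C such that c·(|t₁−t₂| + ‖γ₁−γ₂‖) ≤ ‖u(t₁,γ₁) − u(t₂,γ₂)‖ ≤ C·(|t₁−t₂| + ‖γ₁−γ₂‖) for all t₁,t₂ ∈ [0,ε] and γ₁,γ₂ ∈ Γ. Then for every Lebesgue-null set 𝒩 ⊂ ℝ^d, there is a set A ⊂ Γ with ℋ^{d−1}(A) = ℋ^{d−1}(Γ) such that for every γ ∈ A the set {t ∈ [0,ε] : u(t,γ) ∈ 𝒩} has one-dimensional Lebesgue measure zero. -/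
open Filter Set Metric MeasureTheory
open scoped Topology ENNReal NNReal RealInnerProductSpace Pointwise

noncomputable section

/-!
Let `E ⊆ [0,ε] × Γ` be the set of parameters `(t, γ)` with `u(t, γ) ∈ 𝒩`. Since `u` is
anti-Lipschitz, `ℋ^d(E) ≲ ℋ^d(u(E)) ≤ ℋ^d(𝒩) = 0`, as `ℋ^d ≪ ℒ_d`. A cover of `E` by sets `T_n`
of small diameter covers each slice `{x | (t, x) ∈ E}` by the slices of the `T_n`, and the slice of
`T_n` is nonempty only for `t` in a set of length at most `diam T_n`; integrating in `t` shows that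
the slices of `E` are `ℋ^{d-1}`-null for a.e. `t`. Fubini for `ℒ₁ ⊗ ℋ^{d-1}⌊Γ`, which is
σ-finite because `ℋ^{d-1}(Γ) < ∞`, exchanges the order of the two "almost every" quantifiers.
-/

lemma ae_eq_zero_of_forall_exists_measurable_le_lintegral_le {α : Type*} [MeasurableSpace α]
    {μ : Measure α} {f : α → ℝ≥0∞}
    (h : ∀ η : ℝ≥0∞, 0 < η → ∃ g : α → ℝ≥0∞, Measurable g ∧ f ≤ g ∧ ∫⁻ a, g a ∂μ ≤ η) :
    f =ᵐ[μ] 0 := by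
  choose g hgm hfg hgη using fun k : ℕ => h (k : ℝ≥0∞)⁻¹ (ENNReal.inv_pos.2 (by simp))
  have hG : ∫⁻ a, ⨅ k, g k a ∂μ = 0 := by
    by_contra hne
    obtain ⟨k, hk⟩ := ENNReal.exists_inv_nat_lt hne
    exact hk.not_ge ((lintegral_mono fun a => iInf_le _ k).trans (hgη k))
  filter_upwards [(lintegral_eq_zero_iff (Measurable.iInf hgm)).1 hG] with a ha
  exact nonpos_iff_eq_zero.1 ((le_iInf fun k => hfg k a).trans_eq ha)

lemma ae_measure_slice_eq_zero_comm {α β : Type*} [MeasurableSpace α] [MeasurableSpace β]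
    {μ : Measure α} {ν : Measure β} [SFinite μ] [SFinite ν] {E : Set (α × β)}
    (hE : MeasurableSet E) (h : ∀ᵐ a ∂μ, ν {b | (a, b) ∈ E} = 0) :
    ∀ᵐ b ∂ν, μ {a | (a, b) ∈ E} = 0 := by
  simp only [measure_eq_zero_iff_ae_notMem] at h ⊢
  exact (Measure.ae_ae_comm (p := fun a b => (a, b) ∉ E) hE.compl).1 h

lemma ContinuousOn.measurableSet_inter_preimage {α β : Type*} [TopologicalSpace α]
    [MeasurableSpace α] [OpensMeasurableSpace α] [TopologicalSpace β] [MeasurableSpace β]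
    [BorelSpace β] {f : α → β} {S : Set α} {N : Set β} (hf : ContinuousOn f S)
    (hS : MeasurableSet S) (hN : MeasurableSet N) : MeasurableSet (S ∩ f ⁻¹' N) := by
  rw [← Subtype.image_preimage_coe, ← preimage_comp]
  exact hS.subtype_image (hf.domRestrict.measurable hN)

section HausdorffApprox

variable {X : Type*} [EMetricSpace X] {s : ℝ} {r : ℝ≥0∞}

/-- The size-`r` approximation `ℋ^s_r` of the Hausdorff measure `ℋ^s = ⨆_{r > 0} ℋ^s_r`. -/
def hausdorffApprox (s : ℝ) (r : ℝ≥0∞) (A : Set X) : ℝ≥0∞ :=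
  ⨅ (t : ℕ → Set X) (_ : A ⊆ ⋃ n, t n) (_ : ∀ n, ediam (t n) ≤ r),
    ∑' n, ⨆ _ : (t n).Nonempty, ediam (t n) ^ s

lemma hausdorffApprox_anti {r₁ r₂ : ℝ≥0∞} (h : r₁ ≤ r₂) (A : Set X) :
    hausdorffApprox s r₂ A ≤ hausdorffApprox s r₁ A :=
  iInf_mono fun _ => iInf_mono fun _ => iInf_mono' fun hd => ⟨fun n => (hd n).trans h, le_rfl⟩

lemma hausdorffApprox_le_of_cover {A : Set X} (t : ℕ → Set X) (ht : A ⊆ ⋃ n, t n)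
    (hd : ∀ n, ediam (t n) ≤ r) :
    hausdorffApprox s r A ≤ ∑' n, ⨆ _ : (t n).Nonempty, ediam (t n) ^ s :=
  iInf₂_le_of_le t ht (iInf_le _ hd)

lemma exists_cover_of_hausdorffApprox_lt {η : ℝ≥0∞} {A : Set X}
    (h : hausdorffApprox s r A < η) :
    ∃ t : ℕ → Set X, A ⊆ ⋃ n, t n ∧ (∀ n, ediam (t n) ≤ r) ∧
      ∑' n, (⨆ _ : (t n).Nonempty, ediam (t n) ^ s) < η := by
  simpa only [hausdorffApprox, iInf_lt_iff, exists_prop] using h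

lemma ediam_slice_le {α : Type*} [PseudoEMetricSpace α] (T : Set (α × X)) (a : α) :
    ediam {x | (a, x) ∈ T} ≤ ediam T := by
  have hiso : Isometry (Prod.mk a : X → α × X) := fun x y => by simp [Prod.edist_eq]
  rw [← hiso.ediam_image]
  exact ediam_mono (image_preimage_subset _ _)

/-- The slice at `a` of `T` is empty unless `a ∈ Prod.fst '' T`; the closure only serves to make
the bound measurable in `a`. -/
lemma hausdorffApprox_slice_le_tsum_indicator (hs : 0 ≤ s) {E : Set (ℝ × X)}
    {t : ℕ → Set (ℝ × X)} (hcov : E ⊆ ⋃ n, t n) (hdiam : ∀ n, ediam (t n) ≤ r) (a : ℝ) :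
    hausdorffApprox s r {x | (a, x) ∈ E} ≤ ∑' n, (closure (Prod.fst '' t n)).indicator
      (fun _ => ⨆ _ : (t n).Nonempty, ediam (t n) ^ s) a := by
  refine (hausdorffApprox_le_of_cover (fun n => {x | (a, x) ∈ t n}) (fun x hx => ?_)
    fun n => (ediam_slice_le _ a).trans (hdiam n)).trans
    (ENNReal.tsum_le_tsum fun n => iSup_le fun ⟨x, hx⟩ => ?_)
  · simpa using hcov hx
  · have ha : a ∈ closure (Prod.fst '' t n) := subset_closure ⟨(a, x), hx, rfl⟩
    rw [indicator_of_mem ha]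
    exact le_iSup_of_le ⟨_, hx⟩ (ENNReal.rpow_le_rpow (ediam_slice_le _ a) hs)

lemma lintegral_indicator_closure_fst_le (hs : 0 ≤ s) (T : Set (ℝ × X)) :
    ∫⁻ a, (closure (Prod.fst '' T)).indicator (fun _ => ⨆ _ : T.Nonempty, ediam T ^ s) a ≤
      ⨆ _ : T.Nonempty, ediam T ^ (s + 1) := by
  rw [lintegral_indicator_const isClosed_closure.measurableSet]
  rcases T.eq_empty_or_nonempty with rfl | hT
  · simp
  have hvol : volume (closure (Prod.fst '' T)) ≤ ediam T := by
    refine (Real.volume_le_diam _).trans ?_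
    rw [ediam_closure]
    simpa using LipschitzWith.prod_fst.ediam_image_le T
  simp only [ciSup_pos hT]
  calc ediam T ^ s * volume (closure (Prod.fst '' T)) ≤ ediam T ^ s * ediam T := by gcongr
    _ = ediam T ^ (s + 1) := by rw [ENNReal.rpow_add_of_nonneg _ _ hs zero_le_one, ENNReal.rpow_one]

variable [MeasurableSpace X] [BorelSpace X]

lemma hausdorffMeasure_eq_iSup_hausdorffApprox (A : Set X) :
    μH[s] A = ⨆ (r : ℝ≥0∞) (_ : 0 < r), hausdorffApprox s r A :=
  Measure.hausdorffMeasure_apply s A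

lemma hausdorffApprox_le_hausdorffMeasure (hr : 0 < r) (A : Set X) :
    hausdorffApprox s r A ≤ μH[s] A := by
  rw [hausdorffMeasure_eq_iSup_hausdorffApprox]
  exact le_iSup₂ (f := fun r (_ : 0 < r) => hausdorffApprox s r A) r hr

lemma hausdorffMeasure_eq_zero_of_hausdorffApprox_eq_zero {A : Set X}
    (h : ∀ k : ℕ, hausdorffApprox s (k : ℝ≥0∞)⁻¹ A = 0) : μH[s] A = 0 := by
  rw [hausdorffMeasure_eq_iSup_hausdorffApprox]
  refine nonpos_iff_eq_zero.1 (iSup₂_le fun r hr => ?_)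
  obtain ⟨k, hk⟩ := ENNReal.exists_inv_nat_lt hr.ne'
  exact (hausdorffApprox_anti hk.le A).trans_eq (h k)

lemma ae_hausdorffApprox_slice_eq_zero (hs : 0 ≤ s) {E : Set (ℝ × X)} (hE : μH[s + 1] E = 0)
    (hr : 0 < r) : ∀ᵐ a : ℝ, hausdorffApprox s r {x : X | (a, x) ∈ E} = 0 := by
  refine ae_eq_zero_of_forall_exists_measurable_le_lintegral_le fun η hη => ?_
  have hE' : hausdorffApprox (s + 1) r E < η :=
    (hausdorffApprox_le_hausdorffMeasure hr E).trans_lt (hE ▸ hη)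
  obtain ⟨t, hcov, hdiam, hsum⟩ := exists_cover_of_hausdorffApprox_lt hE'
  have hmeas : ∀ n, Measurable ((closure (Prod.fst '' t n)).indicator
      fun _ : ℝ => ⨆ _ : (t n).Nonempty, ediam (t n) ^ s) := fun n =>
    measurable_const.indicator isClosed_closure.measurableSet
  refine ⟨_, .tsum hmeas, hausdorffApprox_slice_le_tsum_indicator hs hcov hdiam, ?_⟩
  rw [lintegral_tsum fun n => (hmeas n).aemeasurable]
  exact (ENNReal.tsum_le_tsum fun n => lintegral_indicator_closure_fst_le hs (t n)).trans hsum.le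

/-- A weak form of Eilenberg's inequality. -/
theorem ae_hausdorffMeasure_slice_eq_zero (hs : 0 ≤ s) {E : Set (ℝ × X)}
    (hE : μH[s + 1] E = 0) : ∀ᵐ a : ℝ, μH[s] {x : X | (a, x) ∈ E} = 0 := by
  have h := ae_all_iff.2 fun k : ℕ =>
    ae_hausdorffApprox_slice_eq_zero hs hE (r := (k : ℝ≥0∞)⁻¹) (ENNReal.inv_pos.2 (by simp))
  filter_upwards [h] with a ha using hausdorffMeasure_eq_zero_of_hausdorffApprox_eq_zero ha

lemma hausdorffMeasure_inter_preimage_eq_zero_of_antilipschitzWith {Y : Type*}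
    [EMetricSpace Y] [MeasurableSpace Y] [BorelSpace Y] {f : X → Y} {S : Set X} {K : ℝ≥0}
    (hf : AntilipschitzWith K (S.domRestrict f)) (hs : 0 ≤ s) {N : Set Y} (hN : μH[s] N = 0) :
    μH[s] (S ∩ f ⁻¹' N) = 0 := by
  rw [← Subtype.image_preimage_coe,
    Isometry.hausdorffMeasure_image (f := ((↑) : S → X)) isometry_subtype_coe (Or.inl hs)]
  exact nonpos_iff_eq_zero.1 ((hf.hausdorffMeasure_preimage_le hs N).trans_eq (by simp [hN]))

end HausdorffApprox

lemma hausdorffMeasure_eq_zero_of_volume_eq_zero {d : ℕ} {N : Set (Euc d)} (hN : volume N = 0) :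
    μH[(d : ℝ)] N = 0 :=
  Measure.absolutelyContinuous_isAddHaarMeasure μH[(d : ℝ)] volume hN

lemma eq_empty_of_volume_eq_zero {N : Set (Euc 0)} (hN : volume N = 0) : N = ∅ := by
  by_contra hne
  rw [(nonempty_iff_ne_empty.2 hne).eq_univ] at hN
  exact isOpen_univ.measure_ne_zero volume univ_nonempty hN

section BiLipschitz

variable {E F : Type*} [NormedAddCommGroup E] [NormedAddCommGroup F] {u : ℝ → E → F}
  {I : Set ℝ} {Γ : Set E}

lemma Prod.dist_le_abs_sub_add_norm_sub (p q : ℝ × E) : dist p q ≤ |p.1 - q.1| + ‖p.2 - q.2‖ := by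
  rw [Prod.dist_eq, Real.dist_eq, dist_eq_norm]
  exact max_le (le_add_of_nonneg_right (norm_nonneg _)) (le_add_of_nonneg_left (abs_nonneg _))

lemma Prod.abs_sub_add_norm_sub_le_two_mul_dist (p q : ℝ × E) :
    |p.1 - q.1| + ‖p.2 - q.2‖ ≤ 2 * dist p q := by
  rw [Prod.dist_eq, Real.dist_eq, dist_eq_norm]
  linarith [le_max_left |p.1 - q.1| ‖p.2 - q.2‖, le_max_right |p.1 - q.1| ‖p.2 - q.2‖]

lemma lipschitzOnWith_uncurry_of_le {C : ℝ} (hC : 0 ≤ C)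
    (h : ∀ t₁ ∈ I, ∀ t₂ ∈ I, ∀ γ₁ ∈ Γ, ∀ γ₂ ∈ Γ,
      ‖u t₁ γ₁ - u t₂ γ₂‖ ≤ C * (|t₁ - t₂| + ‖γ₁ - γ₂‖)) :
    LipschitzOnWith (2 * C).toNNReal (Function.uncurry u) (I ×ˢ Γ) := by
  refine LipschitzOnWith.of_dist_le_mul fun p hp q hq => ?_
  rw [Real.coe_toNNReal _ (by positivity), dist_eq_norm, mul_comm 2, mul_assoc]
  exact (h _ hp.1 _ hq.1 _ hp.2 _ hq.2).trans
    (mul_le_mul_of_nonneg_left (p.abs_sub_add_norm_sub_le_two_mul_dist q) hC)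

lemma antilipschitzWith_domRestrict_uncurry_of_le {c : ℝ} (hc : 0 < c)
    (h : ∀ t₁ ∈ I, ∀ t₂ ∈ I, ∀ γ₁ ∈ Γ, ∀ γ₂ ∈ Γ,
      c * (|t₁ - t₂| + ‖γ₁ - γ₂‖) ≤ ‖u t₁ γ₁ - u t₂ γ₂‖) :
    AntilipschitzWith c⁻¹.toNNReal ((I ×ˢ Γ).domRestrict (Function.uncurry u)) := by
  refine AntilipschitzWith.of_le_mul_dist fun ⟨p, hp⟩ ⟨q, hq⟩ => ?_
  rw [Real.coe_toNNReal _ (inv_nonneg.2 hc.le), Subtype.dist_eq, ← div_eq_inv_mul,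
    le_div_iff₀' hc]
  exact (mul_le_mul_of_nonneg_left (p.dist_le_abs_sub_add_norm_sub q) hc.le).trans
    ((h _ hp.1 _ hq.1 _ hp.2 _ hq.2).trans_eq (dist_eq_norm _ _).symm)

end BiLipschitz

theorem statement7_general {d : ℕ} (ε : ℝ)
    (Γ : Set (Euc d)) (hΓmeas : MeasurableSet Γ)
    (hΓfin : μH[(d : ℝ) - 1] Γ < ⊤)
    (u : ℝ → Euc d → Euc d) (c C : ℝ) (hc : 0 < c) (hcC : c ≤ C)
    (hbil : ∀ t₁ ∈ Set.Icc (0 : ℝ) ε, ∀ t₂ ∈ Set.Icc (0 : ℝ) ε, ∀ γ₁ ∈ Γ, ∀ γ₂ ∈ Γ,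
      c * (|t₁ - t₂| + ‖γ₁ - γ₂‖) ≤ ‖u t₁ γ₁ - u t₂ γ₂‖ ∧
      ‖u t₁ γ₁ - u t₂ γ₂‖ ≤ C * (|t₁ - t₂| + ‖γ₁ - γ₂‖))
    (N : Set (Euc d)) (hN : volume N = 0) :
    ∃ A ⊆ Γ, μH[(d : ℝ) - 1] A = μH[(d : ℝ) - 1] Γ ∧
      ∀ γ ∈ A, volume {t ∈ Set.Icc (0 : ℝ) ε | u t γ ∈ N} = 0 := by
  rcases eq_or_ne d 0 with rfl | hd
  · exact ⟨Γ, subset_rfl, rfl, fun γ _ => by simp [eq_empty_of_volume_eq_zero hN]⟩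
  have hs : 0 ≤ (d : ℝ) - 1 := sub_nonneg.2 (Nat.one_le_cast.2 (Nat.one_le_iff_ne_zero.2 hd))
  set E := Icc 0 ε ×ˢ Γ ∩ Function.uncurry u ⁻¹' toMeasurable volume N
  have hEmeas : MeasurableSet E :=
    (lipschitzOnWith_uncurry_of_le (hc.le.trans hcC) fun t₁ h₁ t₂ h₂ γ₁ g₁ γ₂ g₂ =>
      (hbil t₁ h₁ t₂ h₂ γ₁ g₁ γ₂ g₂).2).continuousOn.measurableSet_inter_preimage
      (measurableSet_Icc.prod hΓmeas) (measurableSet_toMeasurable _ _)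
  have hE : μH[(d : ℝ) - 1 + 1] E = 0 := by
    rw [sub_add_cancel]
    exact hausdorffMeasure_inter_preimage_eq_zero_of_antilipschitzWith
      (antilipschitzWith_domRestrict_uncurry_of_le hc fun t₁ h₁ t₂ h₂ γ₁ g₁ γ₂ g₂ =>
        (hbil t₁ h₁ t₂ h₂ γ₁ g₁ γ₂ g₂).1) d.cast_nonneg
      (hausdorffMeasure_eq_zero_of_volume_eq_zero (by rwa [measure_toMeasurable]))
  have : IsFiniteMeasure (μH[(d : ℝ) - 1].restrict Γ) := isFiniteMeasure_restrict.2 hΓfin.ne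
  have hswap := ae_measure_slice_eq_zero_comm (μ := volume) (ν := μH[(d : ℝ) - 1].restrict Γ)
    hEmeas ((ae_hausdorffMeasure_slice_eq_zero hs hE).mono fun t ht =>
      nonpos_iff_eq_zero.1 ((Measure.restrict_apply_le _ _).trans_eq ht))
  refine ⟨{γ ∈ Γ | volume {t | (t, γ) ∈ E} = 0}, sep_subset _ _, measure_congr ?_, ?_⟩
  · filter_upwards [(ae_restrict_iff' hΓmeas).1 hswap] with γ hγ
    exact propext ⟨fun h => h.1, fun h => ⟨h, hγ h⟩⟩
  · rintro γ ⟨hγ, hnull⟩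
    refine measure_mono_null (fun t ht => ?_) hnull
    exact ⟨⟨ht.1, hγ⟩, subset_toMeasurable _ _ ht.2⟩

theorem statement7 {d : ℕ} (ε : ℝ) (hε : 0 < ε)
    (Γ : Set (Euc d)) (hΓmeas : MeasurableSet Γ)
    (hΓfin : μH[(d : ℝ) - 1] Γ < ⊤)
    (u : ℝ → Euc d → Euc d) (c C : ℝ) (hc : 0 < c) (hcC : c ≤ C)
    (hbil : ∀ t₁ ∈ Set.Icc (0 : ℝ) ε, ∀ t₂ ∈ Set.Icc (0 : ℝ) ε, ∀ γ₁ ∈ Γ, ∀ γ₂ ∈ Γ,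
      c * (|t₁ - t₂| + ‖γ₁ - γ₂‖) ≤ ‖u t₁ γ₁ - u t₂ γ₂‖ ∧
      ‖u t₁ γ₁ - u t₂ γ₂‖ ≤ C * (|t₁ - t₂| + ‖γ₁ - γ₂‖))
    (N : Set (Euc d)) (hN : volume N = 0) :
    ∃ A ⊆ Γ, μH[(d : ℝ) - 1] A = μH[(d : ℝ) - 1] Γ ∧
      ∀ γ ∈ A, volume {t ∈ Set.Icc (0 : ℝ) ε | u t γ ∈ N} = 0 :=
  statement7_general ε Γ hΓmeas hΓfin u c C hc hcC hbil N hN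
end
end

section
/- Let f : ℝ^d → ℝ∪{+∞} be lower semicontinuous with min f = 0 attained, let ε > 0, and let f_ε(x) := inf_{w∈𝔹} f(x − εw), where 𝔹 is the closed unit ball of ℝ^d. Then for every α ≥ 0, the sublevel set satisfies [f_ε ≤ α] = [f ≤ α] + ε𝔹 (Minkowski sum). -/
open Filter Set Metric MeasureTheory
open scoped Topology ENNReal NNReal RealInnerProductSpace Pointwise

noncomputable section

/-! The infimum defining `f_ε x` ranges over a compact ball, so for lower semicontinuous `f`
it is attained at some `w`; then `x = (x - ε w) + ε w` splits `x` into a point of `[f ≤ α]` and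
a point of `ε𝔹`. -/

theorem LowerSemicontinuous.exists_mem_closedBall_eq_maxConvReg {d : ℕ} {f : Euc d → EReal}
    (hf : LowerSemicontinuous f) (ε : ℝ) (x : Euc d) :
    ∃ w ∈ closedBall (0 : Euc d) 1, f (x - ε • w) = maxConvReg f ε x := by
  have hcont : Continuous fun w : Euc d => x - ε • w := by fun_prop
  obtain ⟨w, hw, hmin⟩ := ((hf.comp hcont).lowerSemicontinuousOn _).exists_isMinOn
    (nonempty_closedBall.2 zero_le_one) (isCompact_closedBall _ _)
  exact ⟨w, hw, le_antisymm (le_iInf₂ fun v hv => hmin hv) (biInf_le _ hw)⟩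

theorem maxConvReg_add_le {d : ℕ} (f : Euc d → EReal) {ε : ℝ} (hε : 0 < ε) (y : Euc d)
    {b : Euc d} (hb : b ∈ closedBall (0 : Euc d) ε) : maxConvReg f ε (y + b) ≤ f y := by
  have hw : ε⁻¹ • b ∈ closedBall (0 : Euc d) 1 := by
    rw [mem_closedBall_zero_iff] at hb ⊢
    rw [norm_smul, Real.norm_of_nonneg (inv_nonneg.2 hε.le), inv_mul_le_iff₀ hε, mul_one]
    exact hb
  calc maxConvReg f ε (y + b) ≤ f (y + b - ε • ε⁻¹ • b) := biInf_le _ hw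
    _ = f y := by rw [smul_inv_smul₀ hε.ne', add_sub_cancel_right]

theorem statement9_general {d : ℕ} (f : Euc d → EReal)
    (hlsc : LowerSemicontinuous f)
    (ε : ℝ) (hε : 0 < ε)
    (α : ℝ) :
    {x : Euc d | maxConvReg f ε x ≤ (α : EReal)}
      = {x : Euc d | f x ≤ (α : EReal)} + Metric.closedBall (0 : Euc d) ε := by
  ext x
  constructor
  · intro hx
    obtain ⟨w, hw, hfw⟩ := hlsc.exists_mem_closedBall_eq_maxConvReg ε x
    have hεw : ε • w ∈ closedBall (0 : Euc d) ε := by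
      rw [mem_closedBall_zero_iff, norm_smul, Real.norm_of_nonneg hε.le]
      exact mul_le_of_le_one_right hε.le (mem_closedBall_zero_iff.1 hw)
    exact ⟨x - ε • w, hfw.trans_le hx, ε • w, hεw, sub_add_cancel x _⟩
  · rintro ⟨y, hy, b, hb, rfl⟩
    exact (maxConvReg_add_le f hε y hb).trans hy

theorem statement9 {d : ℕ} (f : Euc d → EReal)
    (hne_bot : ∀ x, f x ≠ ⊥)
    (hlsc : LowerSemicontinuous f)
    (hmin : ∃ x₀ : Euc d, f x₀ = 0 ∧ ∀ x, (0 : EReal) ≤ f x)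
    (ε : ℝ) (hε : 0 < ε)
    (α : ℝ) (hα : 0 ≤ α) :
    {x : Euc d | maxConvReg f ε x ≤ (α : EReal)}
      = {x : Euc d | f x ≤ (α : EReal)} + Metric.closedBall (0 : Euc d) ε :=
  statement9_general f hlsc ε hε α

end
end

section
/- Let C ⊂ ℝ^d be a nonempty closed convex set and ε > 0. Then the closed set U := ℝ^d \ int(C + ε𝔹), where 𝔹 is the closed unit ball, is ε-prox-regular: every point x ∈ ℝ^d with 0 < d(x,U) < ε has a unique nearest point in U. -/
open Filter Set Metric MeasureTheory
open scoped Topology ENNReal NNReal RealInnerProductSpace Pointwise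

noncomputable section

/-!
For a closed convex `C`, the interior of `C + ε𝔹` is the open thickening `{d(·, C) < ε}`: at a
point with `d(·, C) = ε`, pushing outwards along the ray from its projection onto `C` increases
the distance to `C`. Hence `U = {d(·, C) ≥ ε}`, and since `d(·, C)` is `1`-Lipschitz,
`d(x, U) ≥ ε - d(x, C)`; so `0 < d(x, U) < ε` forces `0 < δ := d(x, C) < ε`. The point `y` on the
ray from the projection `p` of `x` through `x` with `|y - p| = ε` lies in `U` at distance `ε - δ`
from `x`. Any `u ∈ U` at that distance satisfies `ε ≤ |u - p| ≤ |u - x| + |x - p| = ε`, and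
strict convexity of the norm puts `u` on the same ray, so `u = y`.
-/

theorem le_dist_of_mem_compl_thickening {X : Type*} [PseudoMetricSpace X] {C : Set X}
    (hne : C.Nonempty) {ε : ℝ} {u : X} (hu : u ∈ (thickening ε C)ᶜ) (x : X) :
    ε - infDist x C ≤ dist x u := by
  rw [mem_compl_iff, mem_thickening_iff_infDist_lt hne, not_lt] at hu
  linarith [infDist_le_infDist_add_dist (x := u) (y := x) (s := C), dist_comm x u]

section Normed

variable {E : Type*} [SeminormedAddCommGroup E]

theorem infDist_le_of_mem_add_closedBall {C : Set E} {ε : ℝ} {x : E}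
    (hx : x ∈ C + closedBall (0 : E) ε) : infDist x C ≤ ε := by
  obtain ⟨c, hc, b, hb, rfl⟩ := hx
  calc infDist (c + b) C ≤ dist (c + b) c := infDist_le_dist_of_mem hc
    _ ≤ ε := by simpa using hb

theorem dist_add_div_smul_sub [NormedSpace ℝ E] {p x : E} {ε : ℝ} (hδ : 0 < dist x p)
    (hδε : dist x p ≤ ε) : dist x (p + (ε / dist x p) • (x - p)) = ε - dist x p := by
  have hyx : p + (ε / dist x p) • (x - p) - x = (ε / dist x p - 1) • (x - p) := by module
  rw [dist_comm, dist_eq_norm, hyx, norm_smul,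
    Real.norm_of_nonneg (sub_nonneg.2 ((one_le_div hδ).2 hδε)), ← dist_eq_norm, sub_mul,
    div_mul_cancel₀ _ hδ.ne', one_mul]

end Normed

theorem eq_add_smul_of_dist_add_dist_le {E : Type*} [NormedAddCommGroup E] [NormedSpace ℝ E]
    [StrictConvexSpace ℝ E] {p x u : E} {ε : ℝ} (hxp : x ≠ p) (hpu : ε ≤ dist u p)
    (hux : dist x u + dist x p ≤ ε) : u = p + (ε / dist x p) • (x - p) := by
  have hδ : 0 < dist x p := dist_pos.2 hxp
  have hpu' : dist p u = ε := by
    linarith [dist_triangle p x u, dist_comm p x, dist_comm p u]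
  have hε : 0 < ε := by linarith [dist_nonneg (x := x) (y := u)]
  have hx : x = AffineMap.lineMap p u (dist x p / ε) := by
    apply eq_lineMap_of_dist_eq_mul_of_dist_eq_mul
    · rw [hpu', dist_comm]
      field_simp
    · rw [hpu']
      field_simp
      linarith [dist_triangle p x u, dist_comm p x]
  have hxp' : x - p = (dist x p / ε) • (u - p) := by
    rw [← add_sub_cancel_right ((dist x p / ε) • (u - p)) p, ← AffineMap.lineMap_apply_module',
      ← hx]
  rw [hxp', smul_smul, div_mul_div_cancel₀ hδ.ne', div_self hε.ne', one_smul, add_sub_cancel]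

section InnerProduct

variable {E : Type*} [NormedAddCommGroup E] [InnerProductSpace ℝ E] {C : Set E}

theorem Convex.infDist_eq_dist_iff (hC : Convex ℝ C) {x p : E} (hp : p ∈ C) :
    infDist x C = dist x p ↔ ∀ c ∈ C, ⟪x - p, c - p⟫ ≤ 0 := by
  rw [← norm_eq_iInf_iff_real_inner_le_zero hC hp, infDist_eq_iInf, dist_eq_norm, eq_comm]
  simp only [dist_eq_norm]

theorem Convex.exists_infDist_eq_dist [CompleteSpace E] (hC : Convex ℝ C) (hcl : IsClosed C)
    (hne : C.Nonempty) (x : E) : ∃ p ∈ C, infDist x C = dist x p := by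
  obtain ⟨p, hp, hxp⟩ := exists_norm_eq_iInf_of_complete_convex hne hcl.isComplete hC x
  exact ⟨p, hp, (hC.infDist_eq_dist_iff hp).2 ((norm_eq_iInf_iff_real_inner_le_zero hC hp).1 hxp)⟩

/-- Moving away from `C` along the ray from a nearest point keeps that point nearest. -/
theorem Convex.infDist_add_smul_sub (hC : Convex ℝ C) {x p : E} (hp : p ∈ C)
    (hxp : infDist x C = dist x p) {t : ℝ} (ht : 0 ≤ t) :
    infDist (p + t • (x - p)) C = t * dist x p := by
  have hobtuse := (hC.infDist_eq_dist_iff hp).1 hxp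
  rw [(hC.infDist_eq_dist_iff hp).2, dist_eq_norm, dist_eq_norm, add_sub_cancel_left, norm_smul,
    Real.norm_of_nonneg ht]
  intro c hc
  rw [add_sub_cancel_left, real_inner_smul_left]
  exact mul_nonpos_of_nonneg_of_nonpos ht (hobtuse c hc)

theorem Convex.add_div_smul_sub_mem_compl_thickening (hC : Convex ℝ C) {x p : E} (hp : p ∈ C)
    (hxp : infDist x C = dist x p) (hδ : 0 < dist x p) {ε : ℝ} (hε : 0 ≤ ε) :
    p + (ε / dist x p) • (x - p) ∈ (Metric.thickening ε C)ᶜ := by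
  rw [mem_compl_iff, mem_thickening_iff_infDist_lt ⟨p, hp⟩,
    hC.infDist_add_smul_sub hp hxp (by positivity), div_mul_cancel₀ _ hδ.ne']
  exact lt_irrefl ε

theorem Convex.interior_add_closedBall_eq_thickening [CompleteSpace E] (hC : Convex ℝ C)
    (hcl : IsClosed C) (hne : C.Nonempty) {ε : ℝ} (hε : 0 < ε) :
    interior (C + closedBall (0 : E) ε) = Metric.thickening ε C := by
  refine Subset.antisymm (fun x hx => ?_) <| interior_maximal
    (add_ball_zero ε C ▸ add_subset_add_left ball_subset_closedBall) isOpen_thickening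
  rw [mem_thickening_iff_infDist_lt hne]
  by_contra! hεx
  obtain ⟨p, hp, hxp⟩ := hC.exists_infDist_eq_dist hcl hne x
  have hray : Tendsto (fun t : ℝ => p + t • (x - p)) (𝓝[>] 1) (𝓝 x) := by
    have : Continuous fun t : ℝ => p + t • (x - p) := by fun_prop
    simpa using (this.tendsto 1).mono_left nhdsWithin_le_nhds
  obtain ⟨t, ht, ht1⟩ := ((hray.eventually (isOpen_interior.mem_nhds hx)).and
    self_mem_nhdsWithin).exists
  have := infDist_le_of_mem_add_closedBall (interior_subset ht)
  rw [hC.infDist_add_smul_sub hp hxp (by linarith [ht1]), ← hxp] at this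
  nlinarith [ht1]

end InnerProduct

theorem statement10 {d : ℕ} (C : Set (Euc d))
    (hne : C.Nonempty) (hcl : IsClosed C) (hcvx : Convex ℝ C)
    (ε : ℝ) (hε : 0 < ε) :
    ProxRegularWith ε (interior (C + Metric.closedBall (0 : Euc d) ε))ᶜ := by
  rw [hcvx.interior_add_closedBall_eq_thickening hcl hne hε]
  intro x hx₀ hxε
  obtain ⟨p, hp, hxp⟩ := hcvx.exists_infDist_eq_dist hcl hne x
  have hU : (thickening ε C)ᶜ.Nonempty := nonempty_iff_ne_empty.2 fun h => by simp [h] at hx₀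
  have hlow : ∀ u ∈ (thickening ε C)ᶜ, ε - dist x p ≤ dist x u := fun u hu =>
    hxp ▸ le_dist_of_mem_compl_thickening hne hu x
  have hδ : 0 < dist x p := by linarith [(le_infDist hU).2 hlow]
  have hδε : dist x p < ε := by
    have hxU : x ∉ (thickening ε C)ᶜ := fun h => by simp [infDist_zero_of_mem h] at hx₀
    rwa [notMem_compl_iff, mem_thickening_iff_infDist_lt hne, hxp] at hxU
  have hyU := hcvx.add_div_smul_sub_mem_compl_thickening hp hxp hδ hε.le
  have hxy := dist_add_div_smul_sub hδ hδε.le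
  have hinf : infDist x (thickening ε C)ᶜ = ε - dist x p :=
    le_antisymm (hxy ▸ infDist_le_dist_of_mem hyU) ((le_infDist hU).2 hlow)
  refine ⟨_, ⟨hyU, hxy.trans hinf.symm⟩, fun u ⟨hu, hxu⟩ => ?_⟩
  refine eq_add_smul_of_dist_add_dist_le (dist_pos.1 hδ) ?_ (by linarith)
  simpa [infDist_zero_of_mem hp, dist_comm] using le_dist_of_mem_compl_thickening hne hu p

end
end

section
/- Let f : ℝ^d → ℝ∪{+∞} be lower semicontinuous, quasiconvex, with min f = 0 attained. Let x₀ ∈ ℝ^d, δ > 0 and ℓ > 0 be such that B̄(x₀,δ) ⊂ dom f and |∇f|(y) > ℓ for every y ∈ B̄(x₀,δ). Define h := f + I_{B̄(x₀,δ)} and, for ε > 0, h_ε := h ⋄ I_{ε𝔹}. Then: (a) h_ε is quasiconvex and coercive, with dom h_ε = B̄(x₀,δ) + ε𝔹 compact; (b) int([h_ε ≤ α]) ≠ ∅ for every α > inf h_ε; (c) for every x ∈ dom h_ε \ argmin h_ε there exist δ', ℓ' > 0 such that |∇h_ε|(y) > ℓ' for all y ∈ B(x,δ') ∩ dom h_ε;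 (d) for every β ∈ (inf h_ε, sup h_ε), the set ℝ^d \ int([h_ε ≤ β]) is ε-prox-regular. -/
open Filter Set Metric MeasureTheory
open scoped Topology ENNReal NNReal RealInnerProductSpace Pointwise

noncomputable section

/-!
With `h = f + I_{B̄(x₀,δ)}`, lower semicontinuity turns the infimum defining `h_ε x` into a minimum
over `B̄(x,ε)`, so every sublevel set `[h_ε ≤ α]` is the closed `ε`-neighbourhood of the compact
convex set `[h ≤ α]`. Quasiconvexity, coercivity and the domain follow at once. The interior of
such a neighbourhood is the open `ε`-neighbourhood, and its complement is `ε`-prox-regular: the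
nearest point is found on the ray from the projection onto `[h ≤ α]` through the given point.

For the slope, a descent of `h` at a point `u` realizing `h_ε y` translates into a descent of `h_ε`
at `y`. At `u` the function `f` descends at rate `ℓ`, but possibly out of the ball; tilting the
step towards a point `a` of lower value with `dist a u ≥ σ` keeps it inside, by uniform convexity
of the ball, at the price of a factor depending only on `δ` and `σ`.
-/

lemma EReal.exists_pos_add_le_of_lt {a b : EReal} (h : a < b) :
    ∃ γ : ℝ, 0 < γ ∧ a + γ ≤ b := by
  obtain ⟨p, hap, hpb⟩ := EReal.lt_iff_exists_real_btwn.mp h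
  obtain ⟨q, hpq, hqb⟩ := EReal.lt_iff_exists_real_btwn.mp hpb
  refine ⟨q - p, by linarith [EReal.coe_lt_coe_iff.mp hpq], ?_⟩
  calc a + ↑(q - p) ≤ ↑p + ↑(q - p) := by gcongr
    _ = q := by rw [← EReal.coe_add, add_sub_cancel]
    _ ≤ b := hqb.le

lemma EReal.toReal_max_coe_sub_coe_zero (p q : ℝ) :
    (max ((p : EReal) - q) 0).toReal = max (p - q) 0 := by
  rw [← EReal.coe_sub, ← EReal.coe_zero, ← EReal.coe_strictMono.monotone.map_max,
    EReal.toReal_coe]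

section Slope

variable {d : ℕ} {f : Euc d → EReal} {x : Euc d} {c : ℝ}

lemma frequently_add_le_of_ofReal_lt_mslope (hbot : ∀ z, f z ≠ ⊥) (hx : f x ≠ ⊤)
    (h : ENNReal.ofReal c < mslope f x) :
    ∃ᶠ z in 𝓝[≠] x, f z + (c * dist x z : ℝ) ≤ f x := by
  rw [mslope, if_neg hx] at h
  obtain ⟨p, hp⟩ : ∃ p : ℝ, f x = p := ⟨_, (EReal.coe_toReal hx (hbot x)).symm⟩
  refine ((frequently_lt_of_lt_limsup (by isBoundedDefault) h).and_eventually
    self_mem_nhdsWithin).mono fun z ⟨hz, hzx⟩ => ?_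
  have hd : 0 < dist x z := dist_pos.mpr (Ne.symm hzx)
  have hz_bot := hbot z
  rw [ENNReal.ofReal_lt_ofReal_iff', hp] at hz
  rw [hp]
  generalize f z = v at hz hz_bot ⊢
  induction v using EReal.rec with
  | bot => exact absurd rfl hz_bot
  | top => simp at hz
  | coe q =>
    rw [EReal.toReal_max_coe_sub_coe_zero] at hz
    have hpq : 0 < p - q := by
      by_contra! hle
      simp [max_eq_right hle] at hz
    rw [max_eq_left hpq.le, lt_div_iff₀ hd] at hz
    exact_mod_cast (by linarith : q + c * dist x z ≤ p)

lemma ofReal_le_mslope_of_frequently (hbot : ∀ z, f z ≠ ⊥)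
    (h : ∃ᶠ z in 𝓝[≠] x, f z + (c * dist x z : ℝ) ≤ f x) :
    ENNReal.ofReal c ≤ mslope f x := by
  rw [mslope]
  split_ifs with hx
  · exact le_top
  obtain ⟨p, hp⟩ : ∃ p : ℝ, f x = p := ⟨_, (EReal.coe_toReal hx (hbot x)).symm⟩
  refine le_limsup_of_frequently_le' ((h.and_eventually self_mem_nhdsWithin).mono
    fun z ⟨hz, hzx⟩ => ENNReal.ofReal_le_ofReal ?_)
  have hd : 0 < dist x z := dist_pos.mpr (Ne.symm hzx)
  have hz_bot := hbot z
  rw [hp] at hz ⊢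
  generalize f z = v at hz hz_bot ⊢
  induction v using EReal.rec with
  | bot => exact absurd rfl hz_bot
  | top => exact absurd (EReal.top_add_coe _ ▸ hz) (by simp)
  | coe q =>
    rw [EReal.toReal_max_coe_sub_coe_zero, le_div_iff₀ hd]
    have : q + c * dist x z ≤ p := by exact_mod_cast hz
    exact le_max_of_le_left (by linarith)

end Slope

lemma quasiConvexE_iff_quasiconvexOn {d : ℕ} {f : Euc d → EReal} :
    QuasiConvexE f ↔ QuasiconvexOn ℝ univ f := by
  rw [quasiconvexOn_iff_le_max]
  refine ⟨fun hf => ⟨convex_univ, fun x _ y _ a b ha hb hab => ?_⟩,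
    fun ⟨_, hf⟩ x y t ht0 ht1 => hf trivial trivial ht0 (by linarith) (by ring)⟩
  obtain rfl : b = 1 - a := by linarith
  exact hf x y a ha (by linarith)

lemma QuasiConvexE.convex_setOf_le {d : ℕ} {f : Euc d → EReal} (hf : QuasiConvexE f)
    (r : EReal) : Convex ℝ {x | f x ≤ r} := by
  simpa only [mem_univ, true_and] using quasiConvexE_iff_quasiconvexOn.mp hf r

lemma QuasiConvexE.combo_add_le {d : ℕ} {f : Euc d → EReal} (hf : QuasiConvexE f)
    {a w : Euc d} {t : ℝ} (ht0 : 0 ≤ t) (ht1 : t ≤ 1) {x b : EReal} (ha : f a + x ≤ b)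
    (hw : f w + x ≤ b) : f (t • a + (1 - t) • w) + x ≤ b :=
  calc f (t • a + (1 - t) • w) + x ≤ max (f a) (f w) + x := by grw [hf a w t ht0 ht1]
    _ = max (f a + x) (f w + x) := (max_add_add_right _ _ _).symm
    _ ≤ b := max_le ha hw

section MaxConvReg

variable {d : ℕ} {h : Euc d → EReal} {ε : ℝ}

lemma maxConvReg_eq_iInf_closedBall (hε : 0 < ε) (x : Euc d) :
    maxConvReg h ε x = ⨅ y ∈ closedBall x ε, h y := by
  refine le_antisymm (le_iInf₂ fun y hy => ?_) (le_iInf₂ fun w hw => ?_)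
  · refine (iInf₂_le (ε⁻¹ • (x - y)) ?_).trans_eq ?_
    · rw [mem_closedBall_zero_iff, norm_smul, norm_inv, Real.norm_of_nonneg hε.le,
        inv_mul_le_iff₀ hε, mul_one, ← dist_eq_norm, dist_comm]
      exact hy
    · rw [smul_inv_smul₀ hε.ne', sub_sub_cancel]
  · refine iInf₂_le (x - ε • w) ?_
    rw [mem_closedBall, dist_eq_norm, sub_sub_cancel_left, norm_neg, norm_smul,
      Real.norm_of_nonneg hε.le]
    exact mul_le_of_le_one_right hε.le (mem_closedBall_zero_iff.mp hw)

lemma maxConvReg_le (hε : 0 < ε) {x y : Euc d} (hy : y ∈ closedBall x ε) :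
    maxConvReg h ε x ≤ h y := by
  rw [maxConvReg_eq_iInf_closedBall hε]
  exact iInf₂_le y hy

lemma exists_maxConvReg_eq (hh : LowerSemicontinuous h) (hε : 0 < ε) (x : Euc d) :
    ∃ y ∈ closedBall x ε, maxConvReg h ε x = h y := by
  obtain ⟨y, hy, hmin⟩ := LowerSemicontinuousOn.exists_isMinOn
    (nonempty_closedBall.mpr hε.le) (isCompact_closedBall x ε) (hh.lowerSemicontinuousOn _)
  refine ⟨y, hy, (maxConvReg_le hε hy).antisymm ?_⟩
  rw [maxConvReg_eq_iInf_closedBall hε]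
  exact le_iInf₂ hmin

lemma maxConvReg_preimage_eq_add (hh : LowerSemicontinuous h) (hε : 0 < ε) {S : Set EReal}
    (hS : IsLowerSet S) : maxConvReg h ε ⁻¹' S = h ⁻¹' S + closedBall 0 ε := by
  ext x
  constructor
  · intro hx
    obtain ⟨y, hy, hxy⟩ := exists_maxConvReg_eq hh hε x
    refine ⟨y, show h y ∈ S from hxy ▸ hx, x - y, ?_, add_sub_cancel y x⟩
    rwa [mem_closedBall_zero_iff, ← dist_eq_norm, dist_comm]
  · rintro ⟨y, hy, e, he, rfl⟩
    refine hS (maxConvReg_le hε ?_) hy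
    rwa [mem_closedBall, dist_eq_norm, sub_add_cancel_left, norm_neg, ← mem_closedBall_zero_iff]

lemma setOf_maxConvReg_ne_top (hh : LowerSemicontinuous h) (hε : 0 < ε) :
    {x | maxConvReg h ε x ≠ ⊤} = {y | h y ≠ ⊤} + closedBall 0 ε := by
  simp only [← lt_top_iff_ne_top]
  exact maxConvReg_preimage_eq_add hh hε (isLowerSet_Iio ⊤)

lemma maxConvReg_ne_bot (hh : LowerSemicontinuous h) (hε : 0 < ε) (hbot : ∀ y, h y ≠ ⊥)
    (x : Euc d) : maxConvReg h ε x ≠ ⊥ := by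
  obtain ⟨y, -, hy⟩ := exists_maxConvReg_eq hh hε x
  exact hy ▸ hbot y

lemma QuasiConvexE.maxConvReg (hqc : QuasiConvexE h) (hh : LowerSemicontinuous h)
    (hε : 0 < ε) : QuasiConvexE (maxConvReg h ε) := by
  rw [quasiConvexE_iff_quasiconvexOn]
  intro r
  simp only [mem_univ, true_and]
  change Convex ℝ (_root_.maxConvReg h ε ⁻¹' Iic r)
  rw [maxConvReg_preimage_eq_add hh hε (isLowerSet_Iic r)]
  exact (hqc.convex_setOf_le r).add (convex_closedBall 0 ε)

lemma frequently_maxConvReg_add_le (hε : 0 < ε) {c : ℝ} {y u : Euc d} (hu : u ∈ closedBall y ε)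
    (hyu : maxConvReg h ε y = h u) (H : ∃ᶠ z in 𝓝[≠] u, h z + (c * dist u z : ℝ) ≤ h u) :
    ∃ᶠ z in 𝓝[≠] y, maxConvReg h ε z + (c * dist y z : ℝ) ≤ maxConvReg h ε y := by
  have hT : Tendsto (· + (y - u)) (𝓝[≠] u) (𝓝[≠] y) := by
    have := (Homeomorph.addRight (y - u)).map_punctured_nhds_eq u
    rw [Homeomorph.coe_addRight] at this
    simp only [add_sub_cancel] at this
    exact this.le
  refine hT.frequently (H.mono fun z hz => ?_)
  have hdist : dist y (z + (y - u)) = dist u z := by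
    rw [dist_eq_norm, dist_eq_norm]
    congr 1
    abel
  have hz_mem : z ∈ closedBall (z + (y - u)) ε := by
    rwa [mem_closedBall, dist_eq_norm, sub_add_cancel_left, norm_neg, ← dist_eq_norm,
      dist_comm]
  rw [hdist, hyu]
  calc maxConvReg h ε (z + (y - u)) + (c * dist u z : ℝ) ≤ h z + (c * dist u z : ℝ) := by
        gcongr
        exact maxConvReg_le hε hz_mem
    _ ≤ h u := hz

lemma maxConvReg_sublevel_eq_cthickening (hh : LowerSemicontinuous h) (hε : 0 < ε) {r : EReal}
    (hK : IsCompact {y | h y ≤ r}) :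
    {x | maxConvReg h ε x ≤ r} = cthickening ε {y | h y ≤ r} := by
  rw [← hK.add_closedBall_zero hε.le]
  exact maxConvReg_preimage_eq_add hh hε (isLowerSet_Iic r)

end MaxConvReg

section Indicator

variable {d : ℕ} {f : Euc d → EReal} {C : Set (Euc d)} {y : Euc d}

lemma add_erealInd_of_mem (hy : y ∈ C) : f y + erealInd C y = f y := by
  simp [erealInd, hy]

lemma add_erealInd_of_notMem (hf : f y ≠ ⊥) (hy : y ∉ C) : f y + erealInd C y = ⊤ := by
  simp [erealInd, hy, EReal.add_top_of_ne_bot hf]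

lemma add_erealInd_ne_bot (hf : f y ≠ ⊥) : f y + erealInd C y ≠ ⊥ := by
  by_cases hy : y ∈ C
  · rwa [add_erealInd_of_mem hy]
  · simp [add_erealInd_of_notMem hf hy]

lemma mem_of_add_erealInd_ne_top (hf : f y ≠ ⊥) (h : f y + erealInd C y ≠ ⊤) : y ∈ C := by
  by_contra hy
  exact h (add_erealInd_of_notMem hf hy)

lemma setOf_add_erealInd_ne_top (hbot : ∀ y, f y ≠ ⊥) (hdom : ∀ y ∈ C, f y ≠ ⊤) :
    {y | f y + erealInd C y ≠ ⊤} = C := by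
  ext y
  refine ⟨mem_of_add_erealInd_ne_top (hbot y), fun hy => ?_⟩
  rw [mem_ofPred_eq, add_erealInd_of_mem hy]
  exact hdom y hy

lemma LowerSemicontinuous.add_erealInd (hf : LowerSemicontinuous f) (hbot : ∀ y, f y ≠ ⊥)
    (hC : IsClosed C) : LowerSemicontinuous fun y => f y + erealInd C y := by
  rw [lowerSemicontinuous_iff_isClosed_preimage] at hf ⊢
  intro r
  rcases eq_or_ne r ⊤ with rfl | hr
  · simp
  · convert hC.inter (hf r) using 1
    ext y
    by_cases hy : y ∈ C
    · simp [add_erealInd_of_mem hy, hy]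
    · simp [add_erealInd_of_notMem (hbot y) hy, hy, hr]

lemma QuasiConvexE.add_erealInd (hqc : QuasiConvexE f) (hbot : ∀ y, f y ≠ ⊥)
    (hC : Convex ℝ C) : QuasiConvexE fun y => f y + erealInd C y := by
  intro x y t ht0 ht1
  dsimp only
  by_cases hx : x ∈ C
  · by_cases hy : y ∈ C
    · rw [add_erealInd_of_mem (hC hx hy ht0 (by linarith) (by ring)), add_erealInd_of_mem hx,
        add_erealInd_of_mem hy]
      exact hqc x y t ht0 ht1
    · rw [add_erealInd_of_notMem (hbot y) hy]
      exact le_max_of_le_right le_top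
  · rw [add_erealInd_of_notMem (hbot x) hx]
    exact le_max_of_le_left le_top

lemma isCompact_sublevel_add_erealInd (hf : LowerSemicontinuous f) (hbot : ∀ y, f y ≠ ⊥)
    (hC : IsCompact C) (r : ℝ) : IsCompact {y | f y + erealInd C y ≤ r} := by
  refine hC.of_isClosed_subset ((hf.add_erealInd hbot hC.isClosed).isClosed_preimage r)
    fun y hy => ?_
  exact mem_of_add_erealInd_ne_top (hbot y) (ne_top_of_le_ne_top (EReal.coe_ne_top r) hy)

end Indicator

lemma exists_smul_add_smul_mem_closedBall {E : Type*} [NormedAddCommGroup E] [NormedSpace ℝ E]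
    [UniformConvexSpace E] {σ : ℝ} (hσ : 0 < σ) (δ : ℝ) :
    ∃ κ > 0, ∀ ⦃x₀ a u w : E⦄ ⦃t : ℝ⦄, a ∈ closedBall x₀ δ → u ∈ closedBall x₀ δ →
      σ ≤ dist a u → 0 ≤ t → t ≤ 1 / 2 → dist w u ≤ t * κ →
        t • a + (1 - t) • w ∈ closedBall x₀ δ := by
  obtain ⟨κ, hκ, H⟩ := exists_forall_closed_ball_dist_add_le_two_mul_sub E hσ δ
  refine ⟨κ, hκ, fun x₀ a u w t ha hu hau ht0 ht1 hw => ?_⟩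
  rw [mem_closedBall, dist_eq_norm] at ha hu ⊢
  rw [dist_eq_norm] at hau hw
  have hsum : ‖(a - x₀) + (u - x₀)‖ ≤ 2 * δ - κ :=
    H ha hu (by rwa [sub_sub_sub_cancel_right])
  have hsplit : t • a + (1 - t) • w - x₀
      = t • ((a - x₀) + (u - x₀)) + (1 - 2 * t) • (u - x₀) + (1 - t) • (w - u) := by
    module
  rw [hsplit]
  calc _ ≤ ‖t • ((a - x₀) + (u - x₀))‖ + ‖(1 - 2 * t) • (u - x₀)‖ + ‖(1 - t) • (w - u)‖ :=
        norm_add₃_le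
    _ = t * ‖(a - x₀) + (u - x₀)‖ + (1 - 2 * t) * ‖u - x₀‖ + (1 - t) * ‖w - u‖ := by
        rw [norm_smul_of_nonneg ht0, norm_smul_of_nonneg (by linarith),
          norm_smul_of_nonneg (by linarith)]
    _ ≤ t * (2 * δ - κ) + (1 - 2 * t) * δ + (1 - t) * (t * κ) := by
        gcongr <;> linarith
    _ ≤ δ := by nlinarith [mul_nonneg (mul_nonneg ht0 ht0) hκ.le]

lemma exists_descent_rate_add_erealInd {d : ℕ} {f : Euc d → EReal} (hbot : ∀ y, f y ≠ ⊥)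
    (hqc : QuasiConvexE f) {x₀ : Euc d} {δ ℓ σ : ℝ} (hδ : 0 ≤ δ) (hℓ : 0 < ℓ) (hσ : 0 < σ) :
    ∃ c > 0, ∀ ⦃a u⦄, a ∈ closedBall x₀ δ → u ∈ closedBall x₀ δ → σ ≤ dist a u →
      f a < f u → f u ≠ ⊤ → ENNReal.ofReal ℓ < mslope f u →
        ∃ᶠ z in 𝓝[≠] u, f z + erealInd (closedBall x₀ δ) z + (c * dist u z : ℝ)
          ≤ f u + erealInd (closedBall x₀ δ) u := by
  obtain ⟨κ, hκ, hcombo⟩ := exists_smul_add_smul_mem_closedBall (E := Euc d) hσ δ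
  set K := 2 * δ / κ + 1 with hK
  have hK0 : 0 < K := by positivity
  refine ⟨ℓ / K, by positivity, fun a u ha hu hau hlt hutop hslope => ?_⟩
  obtain ⟨γ, hγ, haγ⟩ := EReal.exists_pos_add_le_of_lt hlt
  obtain ⟨p, hp⟩ : ∃ p : ℝ, f u = p := ⟨_, (EReal.coe_toReal hutop (hbot u)).symm⟩
  have hdesc := frequently_add_le_of_ofReal_lt_mslope hbot hutop hslope
  rw [add_erealInd_of_mem hu]
  rw [nhdsWithin_basis_ball.frequently_iff] at hdesc ⊢
  intro r hr
  obtain ⟨w, ⟨hwr, hwu⟩, hw⟩ := hdesc (min (κ / 2) (min (γ / ℓ) (r / K))) (by positivity)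
  set s := dist u w
  have hs0 : 0 < s := dist_pos.mpr (Ne.symm hwu)
  have hsw : dist w u = s := dist_comm w u
  rw [mem_ball, hsw, lt_min_iff, lt_min_iff, lt_div_iff₀' hℓ, lt_div_iff₀' hK0] at hwr
  obtain ⟨hsκ, hsγ, hsr⟩ := hwr
  -- enough tilt towards `a` to stay in the ball, little enough to stay within `K * s` of `u`
  set t := s / κ with ht
  have ht0 : 0 ≤ t := by positivity
  have ht1 : t ≤ 1 / 2 := by rw [ht, div_le_iff₀ hκ]; linarith
  set q := t • a + (1 - t) • w
  have hqB : q ∈ closedBall x₀ δ :=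
    hcombo ha hu hau ht0 ht1 (by rw [hsw, ht, div_mul_cancel₀ s hκ.ne'])
  have hqu : dist q u ≤ K * s :=
    calc dist q u ≤ t * dist a u + (1 - t) * dist w u :=
          (convexOn_univ_dist u).2 trivial trivial ht0 (by linarith) (by ring)
      _ ≤ t * (2 * δ) + s := by
          rw [hsw]
          gcongr
          · linarith [dist_triangle_right a u x₀, mem_closedBall.mp ha, mem_closedBall.mp hu]
          · nlinarith
      _ = K * s := by rw [hK, ht]; field_simp
  have hfa : f a + (ℓ * s : ℝ) ≤ f u := by
    refine le_trans ?_ haγ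
    gcongr f a + ?_
    exact_mod_cast hsγ.le
  have hfq : f q + (ℓ * s : ℝ) ≤ f u := hqc.combo_add_le ht0 (by linarith) hfa hw
  have hqu_ne : q ≠ u := by
    rintro hqu
    rw [hqu, hp, ← EReal.coe_add, EReal.coe_le_coe_iff] at hfq
    nlinarith
  refine ⟨q, ⟨mem_ball.mpr (hqu.trans_lt hsr), hqu_ne⟩, ?_⟩
  rw [add_erealInd_of_mem hqB, dist_comm]
  refine le_trans ?_ hfq
  gcongr f q + ?_
  have hrate : ℓ / K * dist q u ≤ ℓ * s :=
    calc ℓ / K * dist q u ≤ ℓ / K * (K * s) := by gcongr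
      _ = ℓ * s := by field_simp
  exact_mod_cast hrate

section ConvexThickening

variable {E : Type*} [NormedAddCommGroup E] [NormedSpace ℝ E] {C : Set E} {ε : ℝ}

lemma Convex.isMinOn_dist_ray (hC : Convex ℝ C) {u c : E} (hc : c ∈ C)
    (hmin : IsMinOn (dist u) C c) {r : ℝ} (hr : 1 ≤ r) :
    IsMinOn (dist (c + r • (u - c))) C c := by
  intro c' hc'
  have hr0 : 0 < r := by linarith
  have hmem : c + r⁻¹ • (c' - c) ∈ C :=
    hC.add_smul_sub_mem hc hc' ⟨by positivity, inv_le_one_of_one_le₀ hr⟩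
  have hscale : c + r • (u - c) - c' = r • (u - (c + r⁻¹ • (c' - c))) := by
    simp only [smul_sub, smul_add, smul_smul, mul_inv_cancel₀ hr0.ne', one_smul]
    abel
  change dist (c + r • (u - c)) c ≤ dist (c + r • (u - c)) c'
  rw [dist_eq_norm, dist_eq_norm, add_sub_cancel_left, hscale, norm_smul_of_nonneg hr0.le,
    norm_smul_of_nonneg hr0.le, ← dist_eq_norm, ← dist_eq_norm]
  exact mul_le_mul_of_nonneg_left (hmin hmem) hr0.le

-- The point of the ray from `c` through `u` at distance `ε` from `c` lies outside the thickening.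
lemma Convex.dist_add_infDist_compl_thickening_le (hC : Convex ℝ C) {u c : E} (hc : c ∈ C)
    (hmin : IsMinOn (dist u) C c) (huc : u ≠ c) (hucε : dist u c < ε) :
    dist u c + infDist u (Metric.thickening ε C)ᶜ ≤ ε := by
  have huc0 : 0 < dist u c := dist_pos.mpr huc
  set r := ε / dist u c
  have hr : 1 ≤ r := (one_le_div huc0).mpr hucε.le
  have hrd : r * dist u c = ε := div_mul_cancel₀ ε huc0.ne'
  set p := c + r • (u - c)
  have hpc : dist p c = ε := by
    rw [dist_eq_norm, add_sub_cancel_left, norm_smul_of_nonneg (by linarith), ← dist_eq_norm, hrd]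
  have hpS : p ∈ (Metric.thickening ε C)ᶜ := by
    rw [mem_compl_iff, mem_thickening_iff]
    rintro ⟨z, hz, hpz⟩
    have : dist p c ≤ dist p z := hC.isMinOn_dist_ray hc hmin hr hz
    linarith
  have hup : dist u p = ε - dist u c := by
    have : u - p = (1 - r) • (u - c) := by simp only [p]; module
    rw [dist_eq_norm, this, norm_smul, Real.norm_of_nonpos (by linarith), ← dist_eq_norm]
    linarith
  linarith [infDist_le_dist_of_mem hpS (x := u)]

lemma Convex.interior_cthickening (hC : Convex ℝ C) (hε : 0 < ε) :
    interior (Metric.cthickening ε C) = Metric.thickening ε C := by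
  rcases C.eq_empty_or_nonempty with rfl | hne
  · simp
  rw [← closure_thickening hε, (hC.thickening ε).interior_closure_eq_interior_of_nonempty_interior,
    isOpen_thickening.interior_eq]
  rw [isOpen_thickening.interior_eq]
  exact hne.mono (self_subset_thickening hε C)

lemma eq_lineMap_of_notMem_thickening [StrictConvexSpace ℝ E] {u c y : E} (hc : c ∈ C)
    (hy : y ∉ Metric.thickening ε C) (h : dist u c + dist u y ≤ ε) (hε : 0 < ε) :
    u = AffineMap.lineMap y c (dist u y / ε) := by
  have hyc : ε ≤ dist y c := not_lt.mp fun h' => hy (mem_thickening_iff.mpr ⟨c, hc, h'⟩)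
  have hyc' : dist y c = ε := le_antisymm (by linarith [dist_triangle y u c, dist_comm y u]) hyc
  have huc : dist u c = ε - dist u y := by linarith [dist_triangle y u c, dist_comm y u]
  apply eq_lineMap_of_dist_eq_mul_of_dist_eq_mul
  · rw [hyc', dist_comm]
    field_simp
  · rw [hyc', huc]
    field_simp

end ConvexThickening

lemma Convex.proxRegularWith_compl_thickening {d : ℕ} {C : Set (Euc d)} (hC : Convex ℝ C)
    (hCc : IsClosed C) {ε : ℝ} (hε : 0 < ε) : ProxRegularWith ε (Metric.thickening ε C)ᶜ := by
  intro u hρ0 hρε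
  have hCne : C.Nonempty := by
    by_contra hC
    rw [not_nonempty_iff_eq_empty.mp hC, thickening_empty, compl_empty,
      infDist_zero_of_mem (mem_univ u)] at hρ0
    exact hρ0.false
  have hSne : (Metric.thickening ε C)ᶜ.Nonempty := by
    by_contra hS
    rw [not_nonempty_iff_eq_empty.mp hS, infDist_empty] at hρ0
    exact hρ0.false
  set S := (Metric.thickening ε C)ᶜ
  set ρ := infDist u S
  obtain ⟨c, hc, hcd⟩ := hCc.exists_infDist_eq_dist hCne u
  have hmin : IsMinOn (dist u) C c := fun c' hc' => hcd ▸ infDist_le_dist_of_mem hc'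
  have hkey : dist u c + ρ ≤ ε := by
    rcases eq_or_ne u c with rfl | huc
    · simpa using hρε.le
    have huS : u ∉ S := fun h => hρ0.ne' (infDist_zero_of_mem h)
    obtain ⟨z, hz, hdz⟩ := mem_thickening_iff.mp (not_not.mp huS)
    exact hC.dist_add_infDist_compl_thickening_le hc hmin huc ((hmin hz).trans_lt hdz)
  have hline : ∀ y ∈ S, dist u y = ρ → u = AffineMap.lineMap y c (ρ / ε) := by
    intro y hy hyd
    rw [← hyd]
    exact eq_lineMap_of_notMem_thickening hc hy (hyd ▸ hkey) hε
  obtain ⟨y₀, hy₀, hy₀d⟩ := isOpen_thickening.isClosed_compl.exists_infDist_eq_dist hSne u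
  refine ⟨y₀, ⟨hy₀, hy₀d.symm⟩, fun y ⟨hy, hyd⟩ => ?_⟩
  have h := (hline y hy hyd).symm.trans (hline y₀ hy₀ hy₀d.symm)
  rw [AffineMap.lineMap_apply_module, AffineMap.lineMap_apply_module, add_left_inj] at h
  have hne : 1 - ρ / ε ≠ 0 := by
    rw [sub_ne_zero, ne_comm]
    exact div_ne_one_of_ne hρε.ne
  exact smul_right_injective _ hne h

lemma hypH2_maxConvReg_add_erealInd {d : ℕ} {f : Euc d → EReal} (hbot : ∀ y, f y ≠ ⊥)
    (hlsc : LowerSemicontinuous f) (hqc : QuasiConvexE f) {x₀ : Euc d} {δ ℓ ε : ℝ}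
    (hℓ : 0 < ℓ) (hε : 0 < ε) (hdom : ∀ y ∈ closedBall x₀ δ, f y ≠ ⊤)
    (hslope : ∀ y ∈ closedBall x₀ δ, ENNReal.ofReal ℓ < mslope f y) :
    HypH2 (maxConvReg (fun y => f y + erealInd (closedBall x₀ δ) y) ε) := by
  set B := closedBall x₀ δ
  set h := fun y => f y + erealInd B y
  have hh : LowerSemicontinuous h := hlsc.add_erealInd hbot isClosed_closedBall
  rintro x - ⟨y₁, hy₁⟩
  obtain ⟨a, -, hay₁⟩ := exists_maxConvReg_eq hh hε y₁
  obtain ⟨α, hαa, hαx⟩ := EReal.lt_iff_exists_real_btwn.mp (hay₁ ▸ hy₁)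
  have haB : a ∈ B := mem_of_add_erealInd_ne_top (hbot a) (ne_top_of_lt hαa)
  have hxa : ε < dist x a := by
    by_contra! hxa
    have := maxConvReg_le (h := h) hε (mem_closedBall'.mpr hxa)
    exact (hαx.trans_le this).not_gt hαa
  set σ := (dist x a - ε) / 2 with hσ_def
  have hσ : 0 < σ := half_pos (sub_pos.mpr hxa)
  obtain ⟨c, hc, hdesc⟩ := exists_descent_rate_add_erealInd (x₀ := x₀) hbot hqc
    (dist_nonneg.trans (mem_closedBall.mp haB)) hℓ hσ
  have hclosed : IsClosed {z | maxConvReg h ε z ≤ α} := by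
    rw [maxConvReg_sublevel_eq_cthickening hh hε
      (isCompact_sublevel_add_erealInd hlsc hbot (isCompact_closedBall x₀ δ) α)]
    exact isClosed_cthickening
  obtain ⟨r, hr, hball⟩ := Metric.isOpen_iff.mp hclosed.isOpen_compl x hαx.not_ge
  refine ⟨min r σ, lt_min hr hσ, ENNReal.ofReal (c / 2), by positivity, fun y hy hytop => ?_⟩
  obtain ⟨u, hu, hyu⟩ := exists_maxConvReg_eq hh hε y
  have hαu : (α : EReal) < h u := hyu ▸ not_le.mp (hball (ball_subset_ball (min_le_left _ _) hy))
  have huB : u ∈ B := mem_of_add_erealInd_ne_top (hbot u) (show h u ≠ ⊤ from hyu ▸ hytop)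
  have hau : σ ≤ dist a u := by
    linarith [dist_triangle4 x y u a, mem_ball'.mp hy, min_le_right r σ, mem_closedBall'.mp hu,
      dist_comm a u, dist_comm x y, hσ_def]
  have hfau : f a < f u := by
    rw [← add_erealInd_of_mem (f := f) haB, ← add_erealInd_of_mem (f := f) huB]
    exact hαa.trans hαu
  have H := frequently_maxConvReg_add_le hε hu hyu
    (hdesc haB huB hau hfau (hdom u huB) (hslope u huB))
  calc ENNReal.ofReal (c / 2) < ENNReal.ofReal c := by
        rw [ENNReal.ofReal_lt_ofReal_iff hc]
        linarith
    _ ≤ mslope (maxConvReg h ε) y := ofReal_le_mslope_of_frequently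
        (maxConvReg_ne_bot hh hε fun y => add_erealInd_ne_bot (hbot y)) H

theorem statement15_general {d : ℕ} (f : Euc d → EReal)
    (hne_bot : ∀ x, f x ≠ ⊥)
    (hlsc : LowerSemicontinuous f)
    (hqc : QuasiConvexE f)
    (x₀ : Euc d) (δ ℓ : ℝ) (hℓ : 0 < ℓ)
    (hdom : ∀ y ∈ Metric.closedBall x₀ δ, f y ≠ ⊤)
    (hslope : ∀ y ∈ Metric.closedBall x₀ δ, ENNReal.ofReal ℓ < mslope f y)
    (ε : ℝ) (hε : 0 < ε) :
    QuasiConvexE (maxConvReg (fun y => f y + erealInd (Metric.closedBall x₀ δ) y) ε) ∧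
    CoerciveE (maxConvReg (fun y => f y + erealInd (Metric.closedBall x₀ δ) y) ε) ∧
    {x : Euc d | maxConvReg (fun y => f y + erealInd (Metric.closedBall x₀ δ) y) ε x ≠ ⊤}
      = Metric.closedBall x₀ δ + Metric.closedBall (0 : Euc d) ε ∧
    IsCompact {x : Euc d |
      maxConvReg (fun y => f y + erealInd (Metric.closedBall x₀ δ) y) ε x ≠ ⊤} ∧
    (∀ α : ℝ,
      (⨅ x, maxConvReg (fun y => f y + erealInd (Metric.closedBall x₀ δ) y) ε x) < (α : EReal) →
      (interior {x : Euc d |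
        maxConvReg (fun y => f y + erealInd (Metric.closedBall x₀ δ) y) ε x
          ≤ (α : EReal)}).Nonempty) ∧
    HypH2 (maxConvReg (fun y => f y + erealInd (Metric.closedBall x₀ δ) y) ε) ∧
    (∀ β : ℝ,
      (⨅ x, maxConvReg (fun y => f y + erealInd (Metric.closedBall x₀ δ) y) ε x) < (β : EReal) →
      (β : EReal) < (⨆ x, maxConvReg (fun y => f y + erealInd (Metric.closedBall x₀ δ) y) ε x) →
      ProxRegularWith ε (interior {x : Euc d |
        maxConvReg (fun y => f y + erealInd (Metric.closedBall x₀ δ) y) ε x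
          ≤ (β : EReal)})ᶜ) := by
  set h := fun y => f y + erealInd (closedBall x₀ δ) y
  have hh : LowerSemicontinuous h := hlsc.add_erealInd hne_bot isClosed_closedBall
  have hK (r : ℝ) : IsCompact {y | h y ≤ r} :=
    isCompact_sublevel_add_erealInd hlsc hne_bot (isCompact_closedBall x₀ δ) r
  have hqch : QuasiConvexE h := hqc.add_erealInd hne_bot (convex_closedBall x₀ δ)
  have hKconv (r : ℝ) : Convex ℝ {y | h y ≤ r} := hqch.convex_setOf_le r
  have hsub (r : ℝ) : {x | maxConvReg h ε x ≤ r} = cthickening ε {y | h y ≤ r} :=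
    maxConvReg_sublevel_eq_cthickening hh hε (hK r)
  have hint (r : ℝ) : interior {x | maxConvReg h ε x ≤ r} = thickening ε {y | h y ≤ r} := by
    rw [hsub, (hKconv r).interior_cthickening hε]
  have hdom_eq : {x | maxConvReg h ε x ≠ ⊤} = closedBall x₀ δ + closedBall 0 ε := by
    rw [setOf_maxConvReg_ne_top hh hε, setOf_add_erealInd_ne_top hne_bot hdom]
  refine ⟨hqch.maxConvReg hh hε, fun α _ => hsub α ▸ (hK α).cthickening, hdom_eq,
    hdom_eq ▸ (isCompact_closedBall _ _).add (isCompact_closedBall _ _), fun α hα => ?_,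
    hypH2_maxConvReg_add_erealInd hne_bot hlsc hqc hℓ hε hdom hslope,
    fun β _ _ => hint β ▸ Convex.proxRegularWith_compl_thickening (hKconv β) (hK β).isClosed hε⟩
  obtain ⟨x₁, hx₁⟩ := iInf_lt_iff.mp hα
  obtain ⟨y, -, hy⟩ := exists_maxConvReg_eq hh hε x₁
  rw [hint]
  exact ⟨y, self_subset_thickening hε _ (show h y ≤ α from hy ▸ hx₁.le)⟩

theorem statement15 {d : ℕ} (f : Euc d → EReal)
    (hne_bot : ∀ x, f x ≠ ⊥)
    (hlsc : LowerSemicontinuous f)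
    (hqc : QuasiConvexE f)
    (hmin : ∃ x₀ : Euc d, f x₀ = 0 ∧ ∀ x, (0 : EReal) ≤ f x)
    (x₀ : Euc d) (δ ℓ : ℝ) (hδ : 0 < δ) (hℓ : 0 < ℓ)
    (hdom : ∀ y ∈ Metric.closedBall x₀ δ, f y ≠ ⊤)
    (hslope : ∀ y ∈ Metric.closedBall x₀ δ, ENNReal.ofReal ℓ < mslope f y)
    (ε : ℝ) (hε : 0 < ε) :
    QuasiConvexE (maxConvReg (fun y => f y + erealInd (Metric.closedBall x₀ δ) y) ε) ∧
    CoerciveE (maxConvReg (fun y => f y + erealInd (Metric.closedBall x₀ δ) y) ε) ∧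
    {x : Euc d | maxConvReg (fun y => f y + erealInd (Metric.closedBall x₀ δ) y) ε x ≠ ⊤}
      = Metric.closedBall x₀ δ + Metric.closedBall (0 : Euc d) ε ∧
    IsCompact {x : Euc d |
      maxConvReg (fun y => f y + erealInd (Metric.closedBall x₀ δ) y) ε x ≠ ⊤} ∧
    (∀ α : ℝ,
      (⨅ x, maxConvReg (fun y => f y + erealInd (Metric.closedBall x₀ δ) y) ε x) < (α : EReal) →
      (interior {x : Euc d |
        maxConvReg (fun y => f y + erealInd (Metric.closedBall x₀ δ) y) ε x
          ≤ (α : EReal)}).Nonempty) ∧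
    HypH2 (maxConvReg (fun y => f y + erealInd (Metric.closedBall x₀ δ) y) ε) ∧
    (∀ β : ℝ,
      (⨅ x, maxConvReg (fun y => f y + erealInd (Metric.closedBall x₀ δ) y) ε x) < (β : EReal) →
      (β : EReal) < (⨆ x, maxConvReg (fun y => f y + erealInd (Metric.closedBall x₀ δ) y) ε x) →
      ProxRegularWith ε (interior {x : Euc d |
        maxConvReg (fun y => f y + erealInd (Metric.closedBall x₀ δ) y) ε x
          ≤ (β : EReal)})ᶜ) :=
  statement15_general f hne_bot hlsc hqc x₀ δ ℓ hℓ hdom hslope ε hε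

end
end
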